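/- If 0 ≤ x ≤ 1/3, x ≤ y ≤ 1, and x + y ≥ 1, then 4(3x - 2)y^2 + 12(1-x)^2 y - 3(1-x)^2 ≥ 0. -/
import Mathlib


theorem stmt_11 (x y : ℝ) (hx0 : 0 ≤ x) (hx : x ≤ 1/3) (hxy : x ≤ y) (hy : y ≤ 1)
    (hsum : 1 ≤ x + y) :
    4*(3*x - 2)*y^2 + 12*(1-x)^2*y - 3*(1-x)^2 ≥ 0 := by nlinarith [sq_nonneg (x+y-1), sq_nonneg (1-y), sq_nonneg x, mul_nonneg hx0 (sub_nonneg.2 hy), sq_nonneg (y-x), mul_nonneg (sub_nonneg.2 hy) (sub_nonneg.2 hxy), mul_nonneg (sub_nonneg.2 (by linarith : x+y-1 ≤ y)) (sub_nonneg.2 hy)]
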